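/- arXiv:math/0407093 — 2 statements merged into one kernel-verified Lean document; each statement's English description precedes it below -/
import Mathlib

section
/- Let R be a (possibly noncommutative) ring and let x, y, q be elements of R such that q commutes with both x and y, and yx = qxy. Then for every natural number n, (x+y)^n = Σ_{k=0}^{n} C_q(n,k) · x^k · y^{n-k}, where C_q(n,k) denotes the Gaussian binomial coefficient evaluated at q, i.e., the element of R obtained from the integer polynomials defined by the recurrence C_q(n,k) = C_q(n-1,k) + q^{n-k}·C_q(n-1,k-1) with boundary conditions C_q(n,0) = C_q(n,n) = 1. -/
/-- The Gaussian binomial coefficient `C_q(n,k)`, as an element of a ring `R`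
(the image of the integer polynomial defined by the recurrence
`C_q(n,k) = C_q(n-1,k) + q^{n-k}·C_q(n-1,k-1)` with `C_q(n,0) = C_q(n,n) = 1`). -/
def gaussBinom {R : Type*} [Ring R] (q : R) : ℕ → ℕ → R
  | _, 0 => 1
  | 0, _ + 1 => 0
  | n + 1, k + 1 => gaussBinom q n (k + 1) + q ^ (n - k) * gaussBinom q n k

/-!
Induction on `n`, multiplying `(x + y)^n = ∑ C_q(n,k) x^k y^{n-k}` on the right by `x + y`: the
factor `y` raises the power of `y` in each term, while the factor `x` has to be moved past
`y^{n-k}`, which costs `q^{n-k}` since `y^m x = q^m x y^m`. Collecting the coefficient of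
`x^{k+1} y^{n-k}` gives exactly the recurrence `C_q(n+1,k+1) = C_q(n,k+1) + q^{n-k} C_q(n,k)`.
-/

section

variable {R : Type*} [Ring R]

@[simp]
lemma gaussBinom_zero_right (q : R) (n : ℕ) : gaussBinom q n 0 = 1 := by
  cases n <;> rfl

lemma gaussBinom_succ_succ (q : R) (n k : ℕ) :
    gaussBinom q (n + 1) (k + 1) = gaussBinom q n (k + 1) + q ^ (n - k) * gaussBinom q n k :=
  rfl

lemma gaussBinom_eq_zero_of_lt (q : R) : ∀ {n k : ℕ}, n < k → gaussBinom q n k = 0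
  | 0, _ + 1, _ => rfl
  | n + 1, k + 1, hlt => by
    rw [gaussBinom_succ_succ, gaussBinom_eq_zero_of_lt q (by omega : n < k + 1),
      gaussBinom_eq_zero_of_lt q (by omega : n < k), mul_zero, add_zero]

lemma Commute.gaussBinom_left {q r : R} (h : Commute q r) : ∀ n k, Commute (gaussBinom q n k) r
  | n, 0 => by simp
  | 0, _ + 1 => Commute.zero_left r
  | n + 1, k + 1 =>
    (h.gaussBinom_left n (k + 1)).add_left ((h.pow_left _).mul_left (h.gaussBinom_left n k))

lemma sum_gaussBinom_succ_mul_pow_mul_pow (q x y : R) (n : ℕ) :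
    ∑ k ∈ Finset.range (n + 2), gaussBinom q (n + 1) k * x ^ k * y ^ (n + 1 - k) =
      ∑ k ∈ Finset.range (n + 1), q ^ (n - k) * gaussBinom q n k * x ^ (k + 1) * y ^ (n - k) +
        ∑ k ∈ Finset.range (n + 1), gaussBinom q n k * x ^ k * y ^ (n + 1 - k) := by
  rw [Finset.sum_range_succ' _ (n + 1)]
  simp only [gaussBinom_succ_succ, add_mul, Finset.sum_add_distrib, Nat.add_sub_add_right]
  rw [Finset.sum_range_succ (fun k => gaussBinom q n (k + 1) * _ * _),
    Finset.sum_range_succ' (fun k => _ * _ * y ^ (n + 1 - k)),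
    gaussBinom_eq_zero_of_lt q (Nat.lt_succ_self n)]
  simp only [Nat.add_sub_add_right, gaussBinom_zero_right, zero_mul, add_zero]
  abel

variable {q x y : R}

lemma pow_mul_of_mul_eq_mul_mul (hqy : Commute q y) (h : y * x = q * (x * y)) (m : ℕ) :
    y ^ m * x = q ^ m * (x * y ^ m) := by
  induction m with
  | zero => simp
  | succ m ih =>
    calc y ^ (m + 1) * x = y ^ m * (y * x) := by rw [pow_succ, mul_assoc]
      _ = q * (y ^ m * x) * y := by simp only [h, ← mul_assoc, ← (hqy.pow_right m).eq]
      _ = q ^ (m + 1) * (x * y ^ (m + 1)) := by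
          rw [ih, pow_succ', pow_succ]
          simp only [mul_assoc]

lemma mul_pow_mul_pow_mul_of_mul_eq_mul_mul {c : R} (hcq : Commute c q) (hqx : Commute q x)
    (hqy : Commute q y) (h : y * x = q * (x * y)) (k m : ℕ) :
    c * x ^ k * y ^ m * x = q ^ m * c * x ^ (k + 1) * y ^ m := by
  rw [mul_assoc _ (y ^ m), pow_mul_of_mul_eq_mul_mul hqy h, pow_succ]
  simp only [mul_assoc]
  rw [(hqx.pow_pow m k).symm.left_comm, (hcq.pow_right m).left_comm]

end

/-- The q-binomial theorem of Schützenberger: if `q` commutes with `x` and `y`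
and `y * x = q * (x * y)`, then
`(x+y)^n = ∑_{k=0}^n C_q(n,k) x^k y^{n-k}`. -/
theorem q_binomial_theorem {R : Type*} [Ring R] (q x y : R)
    (hqx : Commute q x) (hqy : Commute q y) (h : y * x = q * (x * y)) (n : ℕ) :
    (x + y) ^ n = ∑ k ∈ Finset.range (n + 1), gaussBinom q n k * x ^ k * y ^ (n - k) := by
  induction n with
  | zero => simp
  | succ n ih =>
    have mul_x (k : ℕ) : gaussBinom q n k * x ^ k * y ^ (n - k) * x =
        q ^ (n - k) * gaussBinom q n k * x ^ (k + 1) * y ^ (n - k) :=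
      mul_pow_mul_pow_mul_of_mul_eq_mul_mul ((Commute.refl q).gaussBinom_left n k) hqx hqy h k _
    have mul_y (k : ℕ) (hk : k ∈ Finset.range (n + 1)) :
        gaussBinom q n k * x ^ k * y ^ (n - k) * y =
          gaussBinom q n k * x ^ k * y ^ (n + 1 - k) := by
      rw [mul_assoc, ← pow_succ, Nat.sub_add_comm (Finset.mem_range_succ_iff.mp hk)]
    rw [pow_succ, ih, mul_add, Finset.sum_mul, Finset.sum_mul,
      Finset.sum_congr rfl fun k _ => mul_x k, Finset.sum_congr rfl mul_y,
      sum_gaussBinom_succ_mul_pow_mul_pow]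
end

section
/- Let q be a prime power, let F_q be a finite field with q elements, let H be an n-dimensional linear subspace (hyperplane) of F_q^{n+1}, and let T be a k-dimensional linear subspace of F_q^{n+1} with T ⊆ H, where 0 ≤ k ≤ n. Then the number of (k+1)-dimensional linear subspaces W of F_q^{n+1} such that T ⊆ W and W is not contained in H equals q^{n−k}. -/
open Module Submodule



/-- Let `q` be a prime power, `F` a finite field with `q` elements, `H` an `n`-dimensional
linear subspace (hyperplane) of `F^{n+1}`, and `T` a `k`-dimensional linear subspace of
`F^{n+1}` with `T ⊆ H`, where `0 ≤ k ≤ n`.  Then the number of `(k+1)`-dimensional linear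
subspaces `W` of `F^{n+1}` with `T ⊆ W` and `W` not contained in `H` equals `q^{n−k}`. -/
theorem card_extensions_not_in_hyperplane (q n k : ℕ) (hq : IsPrimePow q)
    (F : Type*) [Field F] [Fintype F] (hF : Fintype.card F = q) (hk : k ≤ n)
    (H T : Submodule F (Fin (n + 1) → F))
    (hH : Module.finrank F H = n) (hT : Module.finrank F T = k) (hTH : T ≤ H) :
    Nat.card {W : Submodule F (Fin (n + 1) → F) //
        Module.finrank F W = k + 1 ∧ T ≤ W ∧ ¬ W ≤ H}
      = q ^ (n - k) := by
  classical
  subst hF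
  haveI : Finite (Submodule F (Fin (n + 1) → F)) :=
    Finite.of_injective (fun p : Submodule F (Fin (n + 1) → F) => (p : Set (Fin (n + 1) → F)))
      SetLike.coe_injective
  set q := Fintype.card F with hq'
  have hq2 : 2 ≤ q := Fintype.one_lt_card
  have hrM : finrank F (Fin (n + 1) → F) = n + 1 := Module.finrank_fin_fun F
  set P : Submodule F (Fin (n + 1) → F) → Prop :=
    fun W => finrank F W = k + 1 ∧ T ≤ W ∧ ¬ W ≤ H with hP
  -- intersection fact : W ⊓ H = T
  have hinter : ∀ W : Submodule F (Fin (n + 1) → F), P W → W ⊓ H = T := by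
    rintro W ⟨hW1, hW2, hW3⟩
    have hsup : W ⊔ H = ⊤ := by
      have hlt : H < W ⊔ H := lt_of_le_of_ne le_sup_right (by
        intro h
        exact hW3 (h ▸ le_sup_left))
      have h1 : n < finrank F ↥(W ⊔ H) := by
        have := Submodule.finrank_lt_finrank_of_lt hlt; rwa [hH] at this
      have h2 : finrank F ↥(W ⊔ H) ≤ n + 1 := by
        have := Submodule.finrank_le (W ⊔ H); rwa [hrM] at this
      apply Submodule.eq_top_of_finrank_eq
      rw [hrM]; omega
    have heq := Submodule.finrank_sup_add_finrank_inf_eq W H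
    rw [hsup, hW1, hH] at heq
    have htop : finrank F (⊤ : Submodule F (Fin (n + 1) → F)) = n + 1 := by
      rw [finrank_top, hrM]
    have hfin : finrank F ↥(W ⊓ H) = k := by omega
    have hle : T ≤ W ⊓ H := le_inf hW2 hTH
    exact (Submodule.eq_of_le_of_finrank_le hle (by rw [hfin, hT])).symm
  have hWrank : ∀ v : Fin (n + 1) → F, v ∉ T → finrank F ↥(T ⊔ span F {v}) = k + 1 := by
    intro v hvT
    have h1 : T < T ⊔ span F {v} :=
      lt_of_le_of_ne le_sup_left (fun h => hvT
        (h ▸ (le_sup_right : span F {v} ≤ T ⊔ span F {v}) (Submodule.mem_span_singleton_self v)))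
    have h2 : k < finrank F ↥(T ⊔ span F {v}) := by
      have := Submodule.finrank_lt_finrank_of_lt h1; rwa [hT] at this
    have heq := Submodule.finrank_sup_add_finrank_inf_eq T (span F {v})
    have hspan1 : finrank F ↥(span F {v}) ≤ 1 := by
      have := finrank_span_le_card (R := F) ({v} : Set (Fin (n + 1) → F))
      simpa using this
    rw [hT] at heq
    omega
  -- the map
  set g : {v : Fin (n + 1) → F // v ∉ H} → {W : Submodule F (Fin (n + 1) → F) // P W} := fun v =>
    ⟨T ⊔ span F {v.1}, by
      have hvT : v.1 ∉ T := fun h => v.2 (hTH h)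
      refine ⟨hWrank v.1 hvT, le_sup_left, fun h => v.2 ?_⟩
      exact h ((le_sup_right : span F {v.1} ≤ _) (Submodule.mem_span_singleton_self v.1))⟩
    with hg
  have hfibiff : ∀ (W : Submodule F (Fin (n + 1) → F)) (hW : P W) (v : Fin (n + 1) → F),
      (v ∉ H ∧ T ⊔ span F {v} = W) ↔ (v ∈ W ∧ v ∉ T) := by
    intro W hW v
    constructor
    · rintro ⟨hvH, rfl⟩
      exact ⟨(le_sup_right : span F {v} ≤ _) (Submodule.mem_span_singleton_self v),
        fun h => hvH (hTH h)⟩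
    · rintro ⟨hvW, hvT⟩
      have hvH : v ∉ H := by
        intro hvH
        exact hvT ((hinter W hW) ▸ (Submodule.mem_inf.2 ⟨hvW, hvH⟩))
      refine ⟨hvH, ?_⟩
      have hle : T ⊔ span F {v} ≤ W := sup_le hW.2.1 ((span_singleton_le_iff_mem v W).2 hvW)
      exact Submodule.eq_of_le_of_finrank_le hle (by rw [hW.1, hWrank v hvT])
  have hcard : ∀ p : Submodule F (Fin (n + 1) → F), Fintype.card p = q ^ finrank F p := by
    intro p
    exact card_eq_pow_finrank
  have hfibcard : ∀ W : {W : Submodule F (Fin (n + 1) → F) // P W},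
      Nat.card {v : {v : Fin (n + 1) → F // v ∉ H} // g v = W} = q ^ (k + 1) - q ^ k := by
    intro W
    have e1 : {v : {v : Fin (n + 1) → F // v ∉ H} // g v = W}
        ≃ {v : Fin (n + 1) → F // v ∉ H ∧ T ⊔ span F {v} = W.1} :=
      { toFun := fun x => ⟨x.1.1, x.1.2, congrArg Subtype.val x.2⟩
        invFun := fun x => ⟨⟨x.1, x.2.1⟩, Subtype.ext x.2.2⟩
        left_inv := fun x => rfl
        right_inv := fun x => rfl }
    have e2 : {v : Fin (n + 1) → F // v ∉ H ∧ T ⊔ span F {v} = W.1}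
        ≃ {v : Fin (n + 1) → F // v ∈ W.1 ∧ v ∉ T} :=
      Equiv.subtypeEquivRight (fun v => hfibiff W.1 W.2 v)
    have e3 : {v : Fin (n + 1) → F // v ∈ W.1 ∧ v ∉ T} ≃ {w : W.1 // (w : Fin (n + 1) → F) ∉ T} :=
      (Equiv.subtypeSubtypeEquivSubtypeInter (fun v : Fin (n + 1) → F => v ∈ W.1) _).symm
    rw [Nat.card_congr (e1.trans (e2.trans e3)), Nat.card_eq_fintype_card]
    have e4 : {w : W.1 // (w : Fin (n + 1) → F) ∈ T} ≃ T :=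
      (Submodule.comapSubtypeEquivOfLe W.2.2.1).toEquiv
    have hcompl : Fintype.card {w : W.1 // ¬ ((w : Fin (n + 1) → F) ∈ T)} =
        Fintype.card W.1 - Fintype.card {w : W.1 // (w : Fin (n + 1) → F) ∈ T} :=
      Fintype.card_subtype_compl _
    rw [hcompl, Fintype.card_congr e4, hcard, hcard, W.2.1, hT]
  -- total cardinality
  have htot : Fintype.card {v : Fin (n + 1) → F // v ∉ H} = q ^ (n + 1) - q ^ n := by
    rw [Fintype.card_subtype_compl]
    have h5 : Fintype.card {x : Fin (n + 1) → F // x ∈ H} = Fintype.card H := rfl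
    rw [h5, hcard H, hH]
    congr 1
    rw [Fintype.card_fun]
    simp [hq']
  haveI : Fintype {W : Submodule F (Fin (n + 1) → F) // P W} := Fintype.ofFinite _
  have hsum : Fintype.card {v : Fin (n + 1) → F // v ∉ H}
      = Fintype.card {W : Submodule F (Fin (n + 1) → F) // P W} * (q ^ (k + 1) - q ^ k) := by
    rw [← Fintype.card_congr (Equiv.sigmaFiberEquiv g), Fintype.card_sigma]
    rw [Finset.sum_congr rfl (fun W _ => ?_), Finset.sum_const, Finset.card_univ, smul_eq_mul]
    rw [← Nat.card_eq_fintype_card, hfibcard W]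
  rw [htot] at hsum
  have hkey : q ^ (n + 1) - q ^ n = q ^ (n - k) * (q ^ (k + 1) - q ^ k) := by
    rw [Nat.mul_sub, ← pow_add, ← pow_add]
    congr 2 <;> omega
  rw [hkey] at hsum
  have hpos : 0 < q ^ (k + 1) - q ^ k := by
    have : q ^ k < q ^ (k + 1) := Nat.pow_lt_pow_right (by omega) (by omega)
    omega
  rw [Nat.card_eq_fintype_card]
  exact Nat.eq_of_mul_eq_mul_right hpos hsum.symm
end
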